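/- Let α ≠ 0 and let H be the two-parameter group acting on ℝ³ by (s,t)·v = (e^s(cos(αs) v₁ − sin(αs) v₂), e^s(sin(αs) v₁ + cos(αs) v₂), e^t v₃). Let 𝒪₂ = {v ∈ ℝ³ : v₁² + v₂² ≠ 0 and v₃ ≠ 0}. Then Σ = {v ∈ ℝ³ : v₁² + v₂² = 1 and |v₃| = 1} is a topological section for the action of H on 𝒪₂; since Σ is compact, the orbit space 𝒪₂/H is compact. -/

import Mathlib

open Set Topology
open scoped Real

noncomputable section

/-- The action of `(s,t) ∈ ℝ²` on `ℝ³`: rotation-dilation `e^s·R(αs)` in the first two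
coordinates and dilation `e^t` in the third. -/
def act (α : ℝ) (p : ℝ × ℝ) (v : Fin 3 → ℝ) : Fin 3 → ℝ :=
  ![Real.exp p.1 * (Real.cos (α * p.1) * v 0 - Real.sin (α * p.1) * v 1),
    Real.exp p.1 * (Real.sin (α * p.1) * v 0 + Real.cos (α * p.1) * v 1),
    Real.exp p.2 * v 2]

/-- `𝒪₂ = {v ∈ ℝ³ : v₁² + v₂² ≠ 0 and v₃ ≠ 0}`. -/
def O2 : Set (Fin 3 → ℝ) := {v | v 0 ^ 2 + v 1 ^ 2 ≠ 0 ∧ v 2 ≠ 0}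

/-- `Σ = {v ∈ ℝ³ : v₁² + v₂² = 1 and |v₃| = 1}`. -/
def Sec : Set (Fin 3 → ℝ) := {v | v 0 ^ 2 + v 1 ^ 2 = 1 ∧ |v 2| = 1}

/-- The orbit equivalence relation on `𝒪₂`; `Quot (orbitRel α)` is the orbit space
`𝒪₂/H` with the quotient topology. -/
def orbitRel (α : ℝ) (x y : ↥O2) : Prop :=
  ∃ p : ℝ × ℝ, act α p (x : Fin 3 → ℝ) = (y : Fin 3 → ℝ)

/-! Every `v ∈ 𝒪₂` is `(s,t)·c` for a unique `c ∈ Σ`, with `(s,t)` read off continuously as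
`(log √(v₁² + v₂²), log |v₃|)`, because the action multiplies `√(v₁² + v₂²)` by `e^s` and
`|v₃|` by `e^t`. This gives the homeomorphism `ℝ² × Σ ≃ₜ 𝒪₂`; the orbit space is then the
continuous image of the compact set `Σ`. -/

open Real

lemma act_act (α : ℝ) (p q : ℝ × ℝ) (v : Fin 3 → ℝ) :
    act α p (act α q v) = act α (p + q) v := by
  funext i
  fin_cases i <;> simp [act, exp_add, mul_add, cos_add, sin_add] <;> ring

lemma act_zero (α : ℝ) (v : Fin 3 → ℝ) : act α 0 v = v := by
  funext i
  fin_cases i <;> simp [act]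

lemma act_sq_add_sq (α : ℝ) (p : ℝ × ℝ) (v : Fin 3 → ℝ) :
    act α p v 0 ^ 2 + act α p v 1 ^ 2 = exp p.1 ^ 2 * (v 0 ^ 2 + v 1 ^ 2) := by
  simp only [act, Matrix.cons_val_zero, Matrix.cons_val_one]
  linear_combination (exp p.1 ^ 2 * (v 0 ^ 2 + v 1 ^ 2)) * sin_sq_add_cos_sq (α * p.1)

lemma act_apply_two (α : ℝ) (p : ℝ × ℝ) (v : Fin 3 → ℝ) : act α p v 2 = exp p.2 * v 2 := by
  simp [act]

lemma continuous_act (α : ℝ) : Continuous fun q : (ℝ × ℝ) × (Fin 3 → ℝ) => act α q.1 q.2 := by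
  refine continuous_pi fun i => ?_
  fin_cases i <;> simp only [act] <;> simp <;> fun_prop

lemma sq_add_sq_pos_of_mem_O2 {v : Fin 3 → ℝ} (hv : v ∈ O2) : 0 < v 0 ^ 2 + v 1 ^ 2 :=
  lt_of_le_of_ne (by positivity) hv.1.symm

lemma Sec_subset_O2 : Sec ⊆ O2 := fun v ⟨h01, h2⟩ =>
  ⟨by rw [h01]; exact one_ne_zero, fun h => by simp [h] at h2⟩

lemma act_mem_O2 (α : ℝ) (p : ℝ × ℝ) {v : Fin 3 → ℝ} (hv : v ∈ O2) : act α p v ∈ O2 := by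
  refine ⟨?_, ?_⟩
  · rw [act_sq_add_sq]
    exact (mul_pos (by positivity) (sq_add_sq_pos_of_mem_O2 hv)).ne'
  · rw [act_apply_two]
    exact mul_ne_zero (exp_pos _).ne' hv.2

lemma isCompact_Sec : IsCompact Sec := by
  have hbounded : Sec ⊆ univ.pi fun _ : Fin 3 => Icc (-1 : ℝ) 1 := by
    rintro v ⟨h01, h2⟩ i -
    have h0 : v 0 ∈ Icc (-1 : ℝ) 1 :=
      abs_le.1 (abs_le_one_iff_mul_self_le_one.2 (by nlinarith [sq_nonneg (v 1)]))
    have h1 : v 1 ∈ Icc (-1 : ℝ) 1 :=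
      abs_le.1 (abs_le_one_iff_mul_self_le_one.2 (by nlinarith [sq_nonneg (v 0)]))
    fin_cases i
    exacts [h0, h1, abs_le.1 h2.le]
  have hclosed : IsClosed Sec :=
    (isClosed_eq (by fun_prop) continuous_const).inter (isClosed_eq (by fun_prop) continuous_const)
  exact (isCompact_univ_pi fun _ => isCompact_Icc).of_isClosed_subset hclosed hbounded

def logCoords (v : Fin 3 → ℝ) : ℝ × ℝ := (log √(v 0 ^ 2 + v 1 ^ 2), log |v 2|)

lemma logCoords_act_of_mem_Sec (α : ℝ) (p : ℝ × ℝ) {c : Fin 3 → ℝ} (hc : c ∈ Sec) :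
    logCoords (act α p c) = p := by
  rw [logCoords, act_sq_add_sq, hc.1, mul_one, sqrt_sq (exp_pos _).le, log_exp, act_apply_two,
    abs_mul, hc.2, mul_one, abs_of_pos (exp_pos _), log_exp]

lemma act_neg_logCoords_mem_Sec (α : ℝ) {v : Fin 3 → ℝ} (hv : v ∈ O2) :
    act α (-logCoords v) v ∈ Sec := by
  have hpos := sq_add_sq_pos_of_mem_O2 hv
  refine ⟨?_, ?_⟩
  · rw [act_sq_add_sq, Prod.fst_neg, logCoords, exp_neg, exp_log (sqrt_pos.2 hpos), inv_pow,
      sq_sqrt hpos.le]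
    exact inv_mul_cancel₀ hpos.ne'
  · rw [act_apply_two, Prod.snd_neg, logCoords, exp_neg, exp_log (abs_pos.2 hv.2), abs_mul,
      abs_inv, abs_abs]
    exact inv_mul_cancel₀ (abs_pos.2 hv.2).ne'

lemma continuousOn_logCoords : ContinuousOn logCoords O2 := by
  refine ContinuousOn.prodMk ?_ ?_
  · refine ContinuousOn.log (by fun_prop) fun v hv => ?_
    exact (sqrt_pos.2 (sq_add_sq_pos_of_mem_O2 hv)).ne'
  · exact ContinuousOn.log (by fun_prop) fun v hv => abs_ne_zero.2 hv.2

def sectionHomeomorph (α : ℝ) : ((ℝ × ℝ) × ↥Sec) ≃ₜ ↥O2 where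
  toFun q := ⟨act α q.1 q.2, act_mem_O2 α q.1 (Sec_subset_O2 q.2.2)⟩
  invFun v := (logCoords v, ⟨act α (-logCoords v) v, act_neg_logCoords_mem_Sec α v.2⟩)
  left_inv := by
    rintro ⟨p, c, hc⟩
    simp only [logCoords_act_of_mem_Sec α p hc, act_act, neg_add_cancel, act_zero]
  right_inv := by
    rintro ⟨v, hv⟩
    simp only [act_act, add_neg_cancel, act_zero]
  continuous_toFun := by
    have := continuous_act α
    fun_prop
  continuous_invFun := by
    have hlog : Continuous fun v : ↥O2 => logCoords v :=
      continuousOn_iff_continuous_domRestrict.1 continuousOn_logCoords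
    have := continuous_act α
    fun_prop

theorem section_compact_case_3a_general (α : ℝ) :
    Sec ⊆ O2 ∧
    (∃ e : ((ℝ × ℝ) × ↥Sec) ≃ₜ ↥O2,
      ∀ (p : ℝ × ℝ) (c : ↥Sec), ((e (p, c) : ↥O2) : Fin 3 → ℝ) = act α p (c : Fin 3 → ℝ)) ∧
    IsCompact Sec ∧
    CompactSpace (Quot (orbitRel α)) := by
  refine ⟨Sec_subset_O2, ⟨sectionHomeomorph α, fun _ _ => rfl⟩, isCompact_Sec, ?_⟩
  have : CompactSpace ↥Sec := isCompact_iff_compactSpace.1 isCompact_Sec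
  let toOrbit : ↥Sec → Quot (orbitRel α) := fun c => Quot.mk _ (inclusion Sec_subset_O2 c)
  have hsurj : Function.Surjective toOrbit := by
    rintro ⟨v⟩
    obtain ⟨⟨p, c⟩, rfl⟩ := (sectionHomeomorph α).surjective v
    exact ⟨c, Quot.sound ⟨p, rfl⟩⟩
  exact hsurj.compactSpace (continuous_quot_mk.comp (continuous_inclusion Sec_subset_O2))

/-- For `α ≠ 0`, the compact set `Σ` is a topological section for the
action of `H` on `𝒪₂`, and consequently the orbit space `𝒪₂/H` is compact. -/
theorem section_compact_case_3a (α : ℝ) (hα : α ≠ 0) :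
    Sec ⊆ O2 ∧
    (∃ e : ((ℝ × ℝ) × ↥Sec) ≃ₜ ↥O2,
      ∀ (p : ℝ × ℝ) (c : ↥Sec), ((e (p, c) : ↥O2) : Fin 3 → ℝ) = act α p (c : Fin 3 → ℝ)) ∧
    IsCompact Sec ∧
    CompactSpace (Quot (orbitRel α)) :=
  section_compact_case_3a_general α
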